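/- For every positive integer p, (1/12)·(1/(p + 1/12) - 1/(p + 1 + 1/12)) < ε_p and ε_p < (1/12)·(1/p - 1/(p+1)). -/

import Mathlib

/-- Robbins' summand: `ε_p = (p + 1/2) log((p+1)/p) - 1`. -/
noncomputable def eps (p : ℕ) : ℝ :=
  ((p : ℝ) + 1/2) * Real.log (((p : ℝ) + 1) / p) - 1

/-- Robbins' double inequality for the summand of the Stirling error term. -/
theorem robbins_eps_bounds (p : ℕ) (hp : 0 < p) :
    (1/12 : ℝ) * (1 / ((p : ℝ) + 1/12) - 1 / ((p : ℝ) + 1 + 1/12)) < eps p ∧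
      eps p < (1/12 : ℝ) * (1 / (p : ℝ) - 1 / ((p : ℝ) + 1)) := by
  have hp' : (0:ℝ) < p := by exact_mod_cast hp
  have hp1 : (1:ℝ) ≤ p := by exact_mod_cast hp
  set q : ℝ := (p : ℝ) with hq
  set t : ℝ := 1 / (2 * q + 1) with ht
  have h2q : (0:ℝ) < 2 * q + 1 := by linarith
  have ht0 : 0 < t := by positivity
  have ht1 : t < 1 := by rw [ht, div_lt_one h2q]; linarith
  have ht2 : t ^ 2 < 1 := by nlinarith
  have ht2' : (0:ℝ) ≤ t ^ 2 := sq_nonneg t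
  -- series for eps p
  have h0 := Real.hasSum_log_one_add_inv hp'
  have hlogeq : Real.log (1 + q⁻¹) = Real.log ((q + 1) / q) := by
    congr 1
    field_simp
  have h1 : HasSum (fun k : ℕ => (1 / (2 * (k:ℝ) + 1)) * (t ^ 2) ^ k)
      (eps p + 1) := by
    have h2 := h0.mul_left (q + 1/2)
    have hterm : ∀ k : ℕ, (1 / (2 * (k:ℝ) + 1)) * (t ^ 2) ^ k
        = (q + 1/2) * ((2:ℝ) * (1 / (2 * (k:ℝ) + 1)) * (1 / (2 * q + 1)) ^ (2 * k + 1)) := by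
      intro k
      have hpow : (1 / (2 * q + 1)) ^ (2 * k + 1) = (t ^ 2) ^ k * t := by
        rw [ht, pow_succ, pow_mul]
      rw [hpow, ht]
      have hk : (0:ℝ) < 2 * (k:ℝ) + 1 := by positivity
      field_simp
    have heq : (eps p + 1) = (q + 1/2) * Real.log (1 + q⁻¹) := by
      rw [hlogeq, eps]; ring
    rw [heq]
    exact HasSum.congr_fun h2 hterm
  have h2 : HasSum (fun k : ℕ => (1 / (2 * ((k:ℝ) + 1) + 1)) * (t ^ 2) ^ (k + 1)) (eps p) := by
    have h3 : HasSum (fun k : ℕ => (1 / (2 * ((k + 1 :ℕ):ℝ) + 1)) * (t ^ 2) ^ (k + 1)) (eps p) := by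
      refine (hasSum_nat_add_iff
        (f := fun k : ℕ => (1 / (2 * (k:ℝ) + 1)) * (t ^ 2) ^ k) 1).mpr ?_
      simpa using h1
    refine h3.congr_fun fun k => ?_
    push_cast
    ring_nf
  constructor
  · -- lower bound
    have hgl : HasSum (fun k : ℕ => (t ^ 2 / 3) ^ (k + 1)) ((t ^ 2 / 3) / (1 - t ^ 2 / 3)) := by
      have h4 : t ^ 2 / 3 < 1 := by linarith
      have h5 : (0:ℝ) ≤ t ^ 2 / 3 := by linarith
      have h6 := (hasSum_geometric_of_lt_one h5 h4).mul_left (t ^ 2 / 3)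
      refine h6.congr_fun fun k => ?_
      rw [pow_succ']
    have hlt : ((t ^ 2 / 3) / (1 - t ^ 2 / 3)) < eps p := by
      refine hasSum_lt (i := 1) ?_ ?_ hgl h2
      · intro k
        have h3k : (2 * ((k:ℝ) + 1) + 1) ≤ 3 ^ (k + 1) := by
          have h7 := one_add_mul_le_pow (a := (2:ℝ)) (by norm_num) (k + 1)
          norm_num at h7
          push_cast at h7 ⊢
          linarith
        have hpos : (0:ℝ) < 2 * ((k:ℝ) + 1) + 1 := by positivity
        simp only
        calc (t ^ 2 / 3) ^ (k + 1) = (t ^ 2) ^ (k + 1) / 3 ^ (k + 1) := div_pow _ _ _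
          _ ≤ (t ^ 2) ^ (k + 1) / (2 * ((k:ℝ) + 1) + 1) :=
              div_le_div_of_nonneg_left (by positivity) hpos h3k
          _ = (1 / (2 * ((k:ℝ) + 1) + 1)) * (t ^ 2) ^ (k + 1) := by ring
      · have ht4 : (0:ℝ) < (t ^ 2) ^ 2 := by positivity
        simp only [Nat.cast_one]
        norm_num
        nlinarith
    refine lt_of_le_of_lt ?_ hlt
    have hd1 : (0:ℝ) < q + 1/12 := by linarith
    have hd2 : (0:ℝ) < q + 1 + 1/12 := by linarith
    have hd3 : (0:ℝ) < 1 - t ^ 2 / 3 := by nlinarith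
    have hval : (t ^ 2 / 3) / (1 - t ^ 2 / 3) = 1 / (12*q^2 + 12*q + 2) := by
      rw [div_eq_div_iff hd3.ne' (by positivity : (12*q^2+12*q+2:ℝ) ≠ 0), ht]
      field_simp
      ring
    have hrhs : (1/12 : ℝ) * (1 / (q + 1/12) - 1 / (q + 1 + 1/12))
        = 1 / (12*q^2 + 14*q + 13/12) := by
      rw [eq_div_iff (by positivity)]
      field_simp
      ring
    rw [hval, hrhs]
    apply one_div_le_one_div_of_le (by nlinarith)
    linarith
  · -- upper bound
    have hd3 : (0:ℝ) < 1 - t ^ 2 := by nlinarith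
    have hgu : HasSum (fun k : ℕ => (1/3 : ℝ) * (t ^ 2) ^ (k + 1)) (t ^ 2 / (3 * (1 - t ^ 2))) := by
      have h6 := (hasSum_geometric_of_lt_one ht2' ht2).mul_left ((1/3) * t ^ 2)
      have h7 : (1/3 : ℝ) * t ^ 2 * (1 - t ^ 2)⁻¹ = t ^ 2 / (3 * (1 - t ^ 2)) := by
        rw [eq_div_iff (mul_pos three_pos hd3).ne']
        field_simp
      rw [h7] at h6
      refine h6.congr_fun fun k => ?_
      rw [pow_succ']
      ring
    have hlt : eps p < t ^ 2 / (3 * (1 - t ^ 2)) := by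
      refine hasSum_lt (i := 1) ?_ ?_ h2 hgu
      · intro k
        have hpos : (0:ℝ) < 2 * ((k:ℝ) + 1) + 1 := by positivity
        have h13 : 1 / (2 * ((k:ℝ) + 1) + 1) ≤ 1/3 := by
          rw [div_le_div_iff₀ hpos (by norm_num)]
          have : (0:ℝ) ≤ (k:ℝ) := Nat.cast_nonneg k
          linarith
        exact mul_le_mul_of_nonneg_right h13 (by positivity)
      · have ht4 : (0:ℝ) < (t ^ 2) ^ 2 := by positivity
        simp only [Nat.cast_one]
        norm_num
        nlinarith
    refine lt_of_lt_of_le hlt ?_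
    have hval : t ^ 2 / (3 * (1 - t ^ 2)) = 1 / (12*q*(q+1)) := by
      rw [div_eq_div_iff (mul_pos three_pos hd3).ne' (by positivity : (12*q*(q+1):ℝ) ≠ 0), ht]
      field_simp
      ring
    have hrhs : (1/12 : ℝ) * (1 / q - 1 / (q + 1)) = 1 / (12*q*(q+1)) := by
      rw [eq_div_iff (by positivity)]
      field_simp
      ring
    rw [hval, hrhs]
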